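/- For any finite simple graph G, the maximum rank over all real skew-symmetric matrices whose graph is G equals twice the matching number of G. -/

import Mathlib

/-!
The rank of a skew-symmetric matrix is the size of a nonsingular principal submatrix. A
nonsingular skew-symmetric `B` supported on the edges of `G` yields a perfect matching of its
index set: for an index `a`, some `b` has `B a b ≠ 0` and `B⁻¹ b a ≠ 0`, and then deleting rows
and columns `a, b` keeps `B` nonsingular, so induction applies. Hence `rank A ≤ 2 · match(G)`.
Conversely, for a maximum matching `M`, a skew matrix supported on `M` is nonsingular on the
vertices of `M`; adding a small multiple of a skew matrix on the other edges of `G` keeps it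
nonsingular while giving its entries the pattern of `G`.
-/

open Matrix

/-- The matching number of a graph: the maximum number of edges in a matching. -/
noncomputable def matchNum {V : Type*} [Fintype V] (G : SimpleGraph V) : ℕ :=
  sSup {k | ∃ M : G.Subgraph, M.IsMatching ∧ M.edgeSet.ncard = k}

/-- The maximum skew rank of a graph `G`: the maximum rank over all real
skew-symmetric matrices whose graph is `G`. -/
noncomputable def maxSkewRank {V : Type*} [Fintype V] [DecidableEq V]
    (G : SimpleGraph V) : ℕ :=
  sSup {r | ∃ A : Matrix V V ℝ, Aᵀ = -A ∧
    (∀ i j : V, i ≠ j → (A i j ≠ 0 ↔ G.Adj i j)) ∧ A.rank = r}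

open Function

namespace Matrix

lemma apply_self_eq_zero_of_transpose_eq_neg {n R : Type*} [Ring R] [NoZeroDivisors R]
    [CharZero R] {A : Matrix n n R} (hA : Aᵀ = -A) (i : n) : A i i = 0 := by
  have := congrFun (congrFun hA i) i
  simp only [transpose_apply, neg_apply] at this
  exact CharZero.eq_neg_self_iff.mp this

lemma exists_eq_submatrix_mul_of_mem_span_cols {m n κ R : Type*} [Fintype κ] [CommSemiring R]
    (A : Matrix m n R) (c : κ → n)
    (hA : ∀ j, A.col j ∈ Submodule.span R (Set.range (A.col ∘ c))) :
    ∃ Y : Matrix κ n R, A = A.submatrix id c * Y := by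
  choose y hy using fun j => (Submodule.mem_span_range_iff_exists_fun R).mp (hA j)
  refine ⟨of fun k j => y j k, ?_⟩
  ext i j
  have := congrFun (hy j) i
  simp only [Finset.sum_apply, Pi.smul_apply, col_apply, smul_eq_mul] at this
  simp [Matrix.mul_apply, ← this, mul_comm]

lemma exists_ne_zero_isUnit_add_smul {𝕜 n : Type*} [NontriviallyNormedField 𝕜] [Fintype n]
    [DecidableEq n] {P : Matrix n n 𝕜} (hP : IsUnit P) (Q : Matrix n n 𝕜) :
    ∃ ε : 𝕜, ε ≠ 0 ∧ IsUnit (P + ε • Q) := by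
  have hcont : Continuous fun ε : 𝕜 => (P + ε • Q).det := by fun_prop
  have hdet : (P + (0 : 𝕜) • Q).det ≠ 0 := by
    simpa [← isUnit_iff_ne_zero, ← isUnit_iff_isUnit_det] using hP
  obtain ⟨ε, hne, hε⟩ :=
    ((hcont.continuousAt.eventually_ne hdet).filter_mono nhdsWithin_le_nhds).and
      (self_mem_nhdsWithin (s := {0}ᶜ)) |>.exists
  exact ⟨ε, hε, (isUnit_iff_isUnit_det _).mpr (isUnit_iff_ne_zero.mpr hne)⟩

variable {ι K : Type*} [Fintype ι] [DecidableEq ι] [Field K]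

lemma isUnit_of_forall_mulVec_eq_zero {A : Matrix ι ι K} (h : ∀ v, A *ᵥ v = 0 → v = 0) :
    IsUnit A :=
  mulVec_injective_iff_isUnit.mp (LinearMap.ker_eq_bot.mp (ker_mulVecLin_eq_bot_iff.mpr h))

theorem exists_isUnit_submatrix_card_eq_rank {A : Matrix ι ι K} (hA : Aᵀ = -A) :
    ∃ S : Finset ι, S.card = A.rank ∧
      IsUnit (A.submatrix ((↑) : S → ι) ((↑) : S → ι)) := by
  obtain ⟨S, -, -, hspan, hli⟩ :=
    exists_linearIndepOn_extension (K := K) (v := A.col) (linearIndepOn_empty K _)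
      (Set.empty_subset Set.univ)
  lift S to Finset ι using S.toFinite
  have hcols : LinearIndependent K (A.col ∘ ((↑) : S → ι)) := hli.linearIndependent
  have hspan' : Submodule.span K (Set.range (A.col ∘ ((↑) : S → ι))) =
      Submodule.span K (Set.range A.col) := by
    refine le_antisymm (Submodule.span_mono (Set.range_comp_subset_range _ _))
      (Submodule.span_le.mpr ?_)
    rintro _ ⟨j, rfl⟩
    simpa [Set.image_eq_range, Function.comp_def] using hspan ⟨j, Set.mem_univ j, rfl⟩
  refine ⟨S, ?_, ?_⟩
  · rw [rank_eq_finrank_span_cols, ← hspan', finrank_span_eq_card hcols, Fintype.card_coe]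
  obtain ⟨Y, hY⟩ := exists_eq_submatrix_mul_of_mem_span_cols A ((↑) : S → ι)
    fun j => hspan' ▸ Submodule.subset_span ⟨j, rfl⟩
  -- skew-symmetry turns the independent columns indexed by `S` into independent rows
  have hrows : LinearIndependent K (A.submatrix ((↑) : S → ι) id).row := by
    have : (A.submatrix ((↑) : S → ι) id).row = -(A.col ∘ ((↑) : S → ι)) := by
      ext k j
      simpa using congrFun (congrFun hA j) k
    exact this ▸ hcols.neg
  have hfactor :
      A.submatrix ((↑) : S → ι) id = A.submatrix (↑) ((↑) : S → ι) * Y := by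
    conv_lhs => rw [hY]
    ext k j; simp [Matrix.mul_apply]
  refine vecMul_injective_iff_isUnit.mp fun c d hcd => vecMul_injective_iff.mpr hrows ?_
  dsimp only at hcd ⊢
  rw [hfactor, ← vecMul_vecMul, ← vecMul_vecMul, hcd]

lemma inv_transpose_eq_neg {B : Matrix ι ι K} (hB : Bᵀ = -B) : B⁻¹ᵀ = -B⁻¹ := by
  rw [transpose_nonsing_inv, hB]
  by_cases hu : IsUnit B.det
  · exact inv_eq_left_inv (by rw [neg_mul_neg, nonsing_inv_mul _ hu])
  · rw [nonsing_inv_apply_not_isUnit _ hu, nonsing_inv_apply_not_isUnit, neg_zero]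
    simpa [det_neg, isUnit_iff_ne_zero] using hu

/-- Writing `v = B⁻¹ *ᵥ (B *ᵥ v)`, where `B *ᵥ v` is supported on `{a, b}` and `B⁻¹` is
skew, the coordinates `a` and `b` of this identity force `(B *ᵥ v) b = 0` and
`(B *ᵥ v) a = 0`. -/
lemma eq_zero_of_mulVec_eq_zero_off_pair [CharZero K] {B : Matrix ι ι K} (hB : Bᵀ = -B)
    (hu : IsUnit B) {a b : ι} (hab : B⁻¹ b a ≠ 0) {v : ι → K} (hva : v a = 0)
    (hvb : v b = 0) (hBv : ∀ k, k ≠ a → k ≠ b → (B *ᵥ v) k = 0) : v = 0 := by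
  have hC := inv_transpose_eq_neg hB
  have hne : a ≠ b := fun h => hab (h ▸ apply_self_eq_zero_of_transpose_eq_neg hC a)
  have hv : v = B⁻¹ *ᵥ (B *ᵥ v) := by
    rw [mulVec_mulVec, nonsing_inv_mul _ ((isUnit_iff_isUnit_det B).mp hu), one_mulVec]
  have hcoord :
      ∀ c, (B⁻¹ *ᵥ (B *ᵥ v)) c = B⁻¹ c a * (B *ᵥ v) a + B⁻¹ c b * (B *ᵥ v) b := fun c =>
    Finset.sum_eq_add a b hne (fun k _ hk => by simp [hBv k hk.1 hk.2]) (by simp) (by simp)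
  have hBa : (B *ᵥ v) a = 0 := by
    have := hcoord b
    rw [← hv, hvb, apply_self_eq_zero_of_transpose_eq_neg hC] at this
    simpa [hab] using this
  have hBb : (B *ᵥ v) b = 0 := by
    have := hcoord a
    rw [← hv, hva, apply_self_eq_zero_of_transpose_eq_neg hC] at this
    have hab' : B⁻¹ a b ≠ 0 := by
      have := congrFun (congrFun hC a) b
      simp only [transpose_apply, neg_apply] at this
      rwa [this, neg_ne_zero] at hab
    simpa [hab'] using this
  have hBv0 : B *ᵥ v = 0 := by
    ext k
    by_cases hka : k = a
    · rwa [hka]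
    by_cases hkb : k = b
    · rwa [hkb]
    exact hBv k hka hkb
  rw [hv, hBv0, mulVec_zero]

theorem exists_ne_zero_isUnit_submatrix_compl_pair [CharZero K] {B : Matrix ι ι K}
    (hB : Bᵀ = -B) (hu : IsUnit B) (a : ι) :
    ∃ b, B a b ≠ 0 ∧ IsUnit (B.submatrix ((↑) : {k // k ≠ a ∧ k ≠ b} → ι)
      ((↑) : {k // k ≠ a ∧ k ≠ b} → ι)) := by
  obtain ⟨b, -, hb⟩ : ∃ b ∈ Finset.univ, B a b * B⁻¹ b a ≠ 0 := by
    refine Finset.exists_ne_zero_of_sum_ne_zero ?_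
    rw [← mul_apply, mul_nonsing_inv _ ((isUnit_iff_isUnit_det B).mp hu), one_apply_eq]
    exact one_ne_zero
  refine ⟨b, left_ne_zero_of_mul hb, isUnit_of_forall_mulVec_eq_zero fun x hx => ?_⟩
  set v : ι → K := fun k => if h : k ≠ a ∧ k ≠ b then x ⟨k, h⟩ else 0
  have hv : v = 0 := by
    refine eq_zero_of_mulVec_eq_zero_off_pair hB hu (right_ne_zero_of_mul hb) (by simp [v])
      (by simp [v]) fun k hka hkb => ?_
    have hxk := congrFun hx ⟨k, hka, hkb⟩
    simp only [mulVec, dotProduct, submatrix_apply, Pi.zero_apply] at hxk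
    have hout : ∑ j : {j // ¬(j ≠ a ∧ j ≠ b)}, B k j * v j = 0 :=
      Finset.sum_eq_zero fun j _ => by simp [v, dif_neg j.2]
    rw [mulVec, dotProduct, ← Fintype.sum_subtype_add_sum_subtype (fun j => j ≠ a ∧ j ≠ b),
      hout, add_zero]
    exact (Finset.sum_congr rfl fun j _ => by simp only [v, dif_pos j.2]).trans hxk
  ext k
  simpa [v, k.2] using congrFun hv k

end Matrix

namespace SimpleGraph

variable {V : Type*}

noncomputable def skewAdjMatrix {K : Type*} [Ring K] (H : SimpleGraph V) (φ : V → K) :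
    Matrix V V K :=
  open Classical in Matrix.of fun i j => if H.Adj i j then φ j - φ i else 0

section SkewAdjMatrix

variable {K : Type*} [Ring K] (H : SimpleGraph V) (φ : V → K)

lemma transpose_skewAdjMatrix : (H.skewAdjMatrix φ)ᵀ = -H.skewAdjMatrix φ := by
  ext i j
  by_cases h : H.Adj i j <;> simp [skewAdjMatrix, h, H.adj_comm j i]

variable {H φ}

lemma skewAdjMatrix_apply_eq_zero_iff (hφ : Injective φ) {i j : V} :
    H.skewAdjMatrix φ i j = 0 ↔ ¬H.Adj i j := by
  by_cases h : H.Adj i j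
  · simpa [skewAdjMatrix, h, sub_eq_zero] using hφ.ne h.ne.symm
  · simp [skewAdjMatrix, h]

end SkewAdjMatrix

theorem exists_isMatching_verts_eq_range_of_isUnit {K : Type*} [Field K] [CharZero K]
    (G : SimpleGraph V) {ι : Type*} [Fintype ι] [DecidableEq ι] {f : ι → V} (hf : Injective f)
    {B : Matrix ι ι K} (hB : Bᵀ = -B) (hu : IsUnit B)
    (hG : ∀ a b, B a b ≠ 0 → G.Adj (f a) (f b)) :
    ∃ M : G.Subgraph, M.IsMatching ∧ M.verts = Set.range f := by
  induction h : Fintype.card ι using Nat.strong_induction_on generalizing ι with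
  | _ n ih =>
  rcases isEmpty_or_nonempty ι with hι | ⟨⟨a⟩⟩
  · exact ⟨⊥, fun v hv => hv.elim, by simp [Set.range_eq_empty]⟩
  obtain ⟨b, hab, hunit⟩ := B.exists_ne_zero_isUnit_submatrix_compl_pair hB hu a
  have hcard : Fintype.card {k // k ≠ a ∧ k ≠ b} < n :=
    h ▸ Fintype.card_subtype_lt (p := fun k => k ≠ a ∧ k ≠ b) (x := a) (by simp)
  obtain ⟨M, hM, hMverts⟩ := ih _ hcard (hf.comp Subtype.val_injective)
    (by rw [transpose_submatrix, hB]; rfl) hunit (fun i j => hG i j) rfl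
  have hGab := hG a b hab
  have hpair : ∀ k, f k ∈ ({f a, f b} : Set V) ↔ ¬(k ≠ a ∧ k ≠ b) := fun k => by
    simp [hf.eq_iff]; tauto
  refine ⟨M ⊔ G.subgraphOfAdj hGab, hM.sup (.subgraphOfAdj hGab) ?_, ?_⟩
  · rw [hM.support_eq_verts, hMverts, Set.disjoint_left]
    rintro _ ⟨k, rfl⟩ hk
    exact (hpair k).mp (subgraphOfAdj_verts G hGab ▸ Subgraph.support_subset_verts _ hk) k.2
  · ext v
    simp only [Subgraph.verts_sup, hMverts, subgraphOfAdj_verts, Set.mem_union, Set.mem_range,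
      Function.comp_apply, Subtype.exists]
    constructor
    · rintro (⟨k, -, rfl⟩ | h)
      · exact ⟨k, rfl⟩
      · rcases h with rfl | rfl <;> exact ⟨_, rfl⟩
    · rintro ⟨k, rfl⟩
      by_cases hk : k ≠ a ∧ k ≠ b
      · exact .inl ⟨k, hk, rfl⟩
      · exact .inr ((hpair k).mpr hk)

namespace Subgraph

variable {G : SimpleGraph V} {M : G.Subgraph}

lemma IsMatching.ncard_verts_eq_two_mul [Finite V] (hM : M.IsMatching) :
    M.verts.ncard = 2 * M.edgeSet.ncard := by
  classical
  have := Fintype.ofFinite V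
  have hdeg : ∀ v : M.verts, M.degree v = 1 := fun v => by
    convert (isMatching_iff_forall_degree.mp hM) v v.2
  rw [← image_coe_edgeSet_coe,
    Set.ncard_image_of_injective _ (Sym2.map.injective Subtype.val_injective),
    ← coe_edgeFinset, Set.ncard_coe_finset, ← sum_degrees_eq_twice_card_edges]
  simp [hdeg, ← Nat.card_coe_set_eq, Nat.card_eq_fintype_card]

lemma IsMatching.isUnit_submatrix_skewAdjMatrix {K : Type*} [Field K] [DecidableEq V]
    [Fintype M.verts] (hM : M.IsMatching) {φ : V → K} (hφ : Injective φ) :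
    IsUnit ((M.spanningCoe.skewAdjMatrix φ).submatrix ((↑) : M.verts → V)
      ((↑) : M.verts → V)) := by
  refine Matrix.isUnit_of_forall_mulVec_eq_zero fun x hx => funext fun w => ?_
  obtain ⟨u, hwu, -⟩ := hM w.2
  -- row `u` of the matrix has its only nonzero entry in column `w`
  have hrow := congrFun hx ⟨u, M.edge_vert hwu.symm⟩
  rw [mulVec, dotProduct, Finset.sum_eq_single w (fun w' _ hw' => ?_) (by simp)] at hrow
  · refine (mul_eq_zero.mp hrow).resolve_left ?_
    simpa [skewAdjMatrix_apply_eq_zero_iff hφ] using hwu.symm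
  · simp [skewAdjMatrix_apply_eq_zero_iff hφ,
      hM.not_adj_left_of_ne (Subtype.coe_ne_coe.mpr hw'.symm) hwu.symm]

end Subgraph

lemma skewAdjMatrix_add_smul_sdiff_apply_ne_zero_iff {K : Type*} [Field K] {G H : SimpleGraph V}
    (hHG : H ≤ G) {φ : V → K} (hφ : Injective φ) {ε : K} (hε : ε ≠ 0) (i j : V) :
    (H.skewAdjMatrix φ + ε • (G \ H).skewAdjMatrix φ) i j ≠ 0 ↔ G.Adj i j := by
  by_cases hH : H.Adj i j
  · have hGH : (G \ H).skewAdjMatrix φ i j = 0 := by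
      simp [skewAdjMatrix_apply_eq_zero_iff hφ, hH]
    simp [hGH, skewAdjMatrix_apply_eq_zero_iff hφ, hH, hHG hH]
  · have hH' : H.skewAdjMatrix φ i j = 0 := (skewAdjMatrix_apply_eq_zero_iff hφ).mpr hH
    simp [hH', hε, skewAdjMatrix_apply_eq_zero_iff hφ, hH]

lemma bddAbove_ncard_edgeSet_isMatching [Finite V] (G : SimpleGraph V) :
    BddAbove {k | ∃ M : G.Subgraph, M.IsMatching ∧ M.edgeSet.ncard = k} :=
  ⟨Nat.card (Sym2 V), by rintro _ ⟨M, -, rfl⟩; exact Set.ncard_le_card _⟩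

variable [Fintype V]

lemma Subgraph.IsMatching.ncard_edgeSet_le_matchNum {G : SimpleGraph V} {M : G.Subgraph}
    (hM : M.IsMatching) : M.edgeSet.ncard ≤ matchNum G :=
  le_csSup (bddAbove_ncard_edgeSet_isMatching G) ⟨M, hM, rfl⟩

lemma exists_isMatching_ncard_edgeSet_eq_matchNum (G : SimpleGraph V) :
    ∃ M : G.Subgraph, M.IsMatching ∧ M.edgeSet.ncard = matchNum G := by
  refine Nat.sSup_mem ?_ (bddAbove_ncard_edgeSet_isMatching G)
  exact ⟨0, ⊥, fun _ hv => hv.elim, by simp⟩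

variable [DecidableEq V]

theorem rank_le_two_mul_matchNum {K : Type*} [Field K] [CharZero K] (G : SimpleGraph V)
    {A : Matrix V V K} (hA : Aᵀ = -A) (hG : ∀ i j, A i j ≠ 0 → G.Adj i j) :
    A.rank ≤ 2 * matchNum G := by
  obtain ⟨S, hS, hu⟩ := A.exists_isUnit_submatrix_card_eq_rank hA
  obtain ⟨M, hM, hverts⟩ := G.exists_isMatching_verts_eq_range_of_isUnit Subtype.val_injective
    (by rw [transpose_submatrix, hA]; rfl) hu fun a b => hG a b
  calc A.rank = M.verts.ncard := by rw [hverts, Subtype.range_coe, Set.ncard_coe_finset, hS]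
    _ = 2 * M.edgeSet.ncard := hM.ncard_verts_eq_two_mul
    _ ≤ 2 * matchNum G := by gcongr; exact hM.ncard_edgeSet_le_matchNum

theorem exists_two_mul_matchNum_le_rank (G : SimpleGraph V) :
    ∃ A : Matrix V V ℝ, Aᵀ = -A ∧ (∀ i j, A i j ≠ 0 ↔ G.Adj i j) ∧
      2 * matchNum G ≤ A.rank := by
  classical
  obtain ⟨M, hM, hcard⟩ := G.exists_isMatching_ncard_edgeSet_eq_matchNum
  set φ : V → ℝ := fun v => (Fintype.equivFin V v : ℝ)
  have hφ : Injective φ :=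
    Nat.cast_injective.comp (Fin.val_injective.comp (Fintype.equivFin V).injective)
  set P := M.spanningCoe.skewAdjMatrix φ
  set Q := (G \ M.spanningCoe).skewAdjMatrix φ
  obtain ⟨ε, hε, hu⟩ := Matrix.exists_ne_zero_isUnit_add_smul
    (hM.isUnit_submatrix_skewAdjMatrix hφ) (Q.submatrix ((↑) : M.verts → V) (↑))
  refine ⟨P + ε • Q, ?_, skewAdjMatrix_add_smul_sdiff_apply_ne_zero_iff
    (Subgraph.spanningCoe_le M) hφ hε, ?_⟩
  · rw [transpose_add, transpose_smul, transpose_skewAdjMatrix, transpose_skewAdjMatrix,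
      smul_neg, neg_add]
  calc 2 * matchNum G = Fintype.card M.verts := by
        rw [← hcard, ← hM.ncard_verts_eq_two_mul, ← Nat.card_coe_set_eq,
          Nat.card_eq_fintype_card]
    _ = ((P + ε • Q).submatrix ((↑) : M.verts → V) ((↑) : M.verts → V)).rank :=
        (rank_of_isUnit _ hu).symm
    _ ≤ (P + ε • Q).rank := rank_submatrix_le _ _ _

end SimpleGraph

/-- The maximum skew rank of a graph equals twice its matching number. -/
theorem maxSkewRank_eq_two_mul_matchNum {V : Type*} [Fintype V] [DecidableEq V]
    (G : SimpleGraph V) : maxSkewRank G = 2 * matchNum G := by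
  have hle : ∀ A : Matrix V V ℝ, Aᵀ = -A → (∀ i j, i ≠ j → (A i j ≠ 0 ↔ G.Adj i j)) →
      A.rank ≤ 2 * matchNum G := fun A hA hG =>
    G.rank_le_two_mul_matchNum hA fun i j hij =>
      (hG i j fun h => hij (h ▸ apply_self_eq_zero_of_transpose_eq_neg hA i)).mp hij
  obtain ⟨A, hA, hG, hrank⟩ := G.exists_two_mul_matchNum_le_rank
  refine IsGreatest.csSup_eq ⟨⟨A, hA, fun i j _ => hG i j, ?_⟩, ?_⟩
  · exact (hle A hA fun i j _ => hG i j).antisymm hrank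
  · rintro _ ⟨A, hA, hG, rfl⟩
    exact hle A hA hG
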